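/- Let f(n, k) denote the number of words in [k]^n avoiding the pattern 212. Then for every integer k ≥ 0, the identity (∑_{n ≥ 0} f(n, k)·x^n) · (∏_{j=0}^{k-1} (1 + j·x²) - x·∑_{j=0}^{k-1} ∏_{0 ≤ i ≤ k-1, i ≠ j} (1 + i·x²)) = ∏_{j=0}^{k-1} (1 + j·x²) holds as an identity of formal power series over ℚ. -/

import Mathlib

/-!
Let `g_j` count the 212-avoiding words by length whose first letter is `j + 1`. Prepending
`j + 1` to an avoiding word `v` of length `n + 1` keeps it avoiding unless `v` starts with
`a (j + 1)` for one of the `j` letters `a ≤ j`, and such a `v` is `a` followed by a word counted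
by `g_j`. Hence `g_j(n + 2) + j g_j(n) = f(n + 1)`, i.e. `G_j (1 + j x²) = x F` for the
generating functions. Since `F = 1 + ∑ G_j`, multiplying by `P = ∏ (1 + j x²)` gives
`x F ∑_j P / (1 + j x²) = ∑_j G_j P = (F - 1) P`, which is the identity.
-/

open PowerSeries

/-- The `i`-th letter (1-based value in `{1,…,k}`) of a word `w ∈ [k]^n`,
with value `0` outside the word. -/
def letter {n k : ℕ} (w : Fin n → Fin k) (i : ℕ) : ℕ :=
  if h : i < n then (w ⟨i, h⟩ : ℕ) + 1 else 0

/-- `w` avoids the pattern 212: there is no 0-based index `i` with `i + 2 < n`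
such that `w i = w (i+2)` and `w (i+1) < w i`. -/
def Avoids212 {n k : ℕ} (w : Fin n → Fin k) : Prop :=
  ∀ i : ℕ, i + 2 < n →
    ¬ (letter w i = letter w (i + 2) ∧ letter w (i + 1) < letter w i)

/-- The number of words in `[k]^n` avoiding 212. -/
noncomputable def f (n k : ℕ) : ℕ := Nat.card {w : Fin n → Fin k // Avoids212 w}

lemma letter_of_lt {n k i : ℕ} (w : Fin n → Fin k) (h : i < n) :
    letter w i = (w ⟨i, h⟩ : ℕ) + 1 :=
  dif_pos h

lemma letter_of_le {n k i : ℕ} (w : Fin n → Fin k) (h : n ≤ i) : letter w i = 0 :=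
  dif_neg (Nat.not_lt.2 h)

lemma letter_zero {n k : ℕ} (w : Fin (n + 1) → Fin k) : letter w 0 = (w 0 : ℕ) + 1 :=
  letter_of_lt w n.succ_pos

lemma letter_cons_zero {n k : ℕ} (b : Fin k) (v : Fin n → Fin k) :
    letter (Fin.cons b v : Fin (n + 1) → Fin k) 0 = b + 1 :=
  letter_zero _

lemma letter_cons_succ {n k : ℕ} (b : Fin k) (v : Fin n → Fin k) (i : ℕ) :
    letter (Fin.cons b v : Fin (n + 1) → Fin k) (i + 1) = letter v i := by
  by_cases h : i < n
  · rw [letter_of_lt _ (Nat.succ_lt_succ h), letter_of_lt _ h]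
    rfl
  · rw [letter_of_le _ (by omega), letter_of_le _ (by omega)]

lemma letter_tail {n k : ℕ} (v : Fin (n + 1) → Fin k) (i : ℕ) :
    letter (Fin.tail v) i = letter v (i + 1) := by
  conv_rhs => rw [← Fin.cons_self_tail v]
  rw [letter_cons_succ]

lemma cons_tail_of_letter_zero {n k j : ℕ} (hj : j < k) (w : Fin (n + 1) → Fin k)
    (h : letter w 0 = j + 1) : Fin.cons ⟨j, hj⟩ (Fin.tail w) = w := by
  have hw : w 0 = ⟨j, hj⟩ := Fin.ext (by rw [letter_zero] at h; exact Nat.succ_injective h)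
  rw [← hw, Fin.cons_self_tail]

lemma avoids212_of_le_two {n k : ℕ} (w : Fin n → Fin k) (hn : n ≤ 2) : Avoids212 w :=
  fun i hi => absurd hi (by omega)

def ConsCreates212 {n k : ℕ} (b : ℕ) (v : Fin n → Fin k) : Prop :=
  letter v 1 = b + 1 ∧ letter v 0 < b + 1

lemma avoids212_cons_iff {n k : ℕ} (b : Fin k) (v : Fin n → Fin k) :
    Avoids212 (Fin.cons b v : Fin (n + 1) → Fin k) ↔ Avoids212 v ∧ ¬ ConsCreates212 b v := by
  constructor
  · intro h
    refine ⟨fun i hi => by simpa only [letter_cons_succ] using h (i + 1) (by omega), ?_⟩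
    by_cases hn : 2 < n + 1
    · simpa only [ConsCreates212, letter_cons_zero, letter_cons_succ, eq_comm] using h 0 hn
    · simp [ConsCreates212, letter_of_le v (show n ≤ 1 by omega)]
  · rintro ⟨hv, hfront⟩ (_ | i) hi
    · simpa only [ConsCreates212, letter_cons_zero, letter_cons_succ, eq_comm] using hfront
    · simpa only [letter_cons_succ] using hv i (by omega)

lemma Avoids212.tail {n k : ℕ} {v : Fin (n + 1) → Fin k} (h : Avoids212 v) :
    Avoids212 (Fin.tail v) := by
  rw [← Fin.cons_self_tail v, avoids212_cons_iff] at h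
  exact h.1

noncomputable def fFirst (n k j : ℕ) : ℕ :=
  Nat.card {w : Fin n → Fin k // Avoids212 w ∧ letter w 0 = j + 1}

lemma f_zero (k : ℕ) : f 0 k = 1 := by
  rw [f, Nat.card_congr (Equiv.subtypeUnivEquiv fun w => avoids212_of_le_two w (by omega)),
    Nat.card_fun]
  simp

lemma fFirst_zero (k j : ℕ) : fFirst 0 k j = 0 := by
  rw [fFirst, Nat.card_eq_zero]
  left
  exact ⟨fun w => by simpa [letter_of_le] using w.2.2⟩

lemma fFirst_one {k j : ℕ} (hj : j < k) : fFirst 1 k j = 1 := by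
  rw [fFirst, Nat.card_eq_one_iff_unique]
  refine ⟨⟨fun w w' => Subtype.ext ?_⟩, ⟨⟨fun _ => ⟨j, hj⟩, avoids212_of_le_two _ (by omega), rfl⟩⟩⟩
  rw [← cons_tail_of_letter_zero hj w.1 w.2.2, ← cons_tail_of_letter_zero hj w'.1 w'.2.2]
  exact congrArg _ (Subsingleton.elim _ _)

lemma f_succ (n k : ℕ) : f (n + 1) k = ∑ j ∈ Finset.range k, fFirst (n + 1) k j := by
  let e : {w : Fin (n + 1) → Fin k // Avoids212 w} ≃
      Σ b : Fin k, {w : Fin (n + 1) → Fin k // Avoids212 w ∧ letter w 0 = b + 1} :=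
    { toFun w := ⟨w.1 0, w.1, w.2, letter_zero _⟩
      invFun p := ⟨p.2.1, p.2.2.1⟩
      left_inv _ := rfl
      right_inv := by
        rintro ⟨b, w, hw, h0⟩
        obtain rfl : w 0 = b := Fin.ext (by rw [letter_zero] at h0; omega)
        rfl }
  rw [f, Nat.card_congr e, Nat.card_sigma, Finset.sum_range fun j => fFirst (n + 1) k j]
  rfl

lemma Nat.card_subtype_eq_card_and_add_card_and_not {α : Type*} (p q : α → Prop)
    [Finite {x // p x}] :
    Nat.card {x // p x} = Nat.card {x // p x ∧ q x} + Nat.card {x // p x ∧ ¬ q x} := by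
  classical
  rw [← Nat.card_congr (Equiv.sumCompl fun x : {x // p x} => q x), Nat.card_sum,
    Nat.card_congr (Equiv.subtypeSubtypeEquivSubtypeInter p q),
    Nat.card_congr (Equiv.subtypeSubtypeEquivSubtypeInter p fun x => ¬ q x)]

def avoidersTailEquiv {n k j : ℕ} (hj : j < k) :
    {w : Fin (n + 2) → Fin k // Avoids212 w ∧ letter w 0 = j + 1} ≃
      {v : Fin (n + 1) → Fin k // Avoids212 v ∧ ¬ ConsCreates212 j v} where
  toFun w := ⟨Fin.tail w.1, (avoids212_cons_iff ⟨j, hj⟩ _).1 <| by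
    rw [cons_tail_of_letter_zero hj w.1 w.2.2]; exact w.2.1⟩
  invFun v := ⟨Fin.cons ⟨j, hj⟩ v.1, (avoids212_cons_iff _ _).2 v.2, letter_cons_zero _ _⟩
  left_inv w := Subtype.ext (cons_tail_of_letter_zero hj w.1 w.2.2)
  right_inv v := Subtype.ext (Fin.tail_cons (α := fun _ => Fin k) ⟨j, hj⟩ v.1)

def avoidersConsEquiv {n k j : ℕ} (hj : j < k) :
    Fin j × {u : Fin n → Fin k // Avoids212 u ∧ letter u 0 = j + 1} ≃
      {v : Fin (n + 1) → Fin k // Avoids212 v ∧ ConsCreates212 j v} where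
  toFun p :=
    ⟨Fin.cons (Fin.castLE hj.le p.1) p.2.1,
      (avoids212_cons_iff _ _).2 ⟨p.2.2.1, fun h => by
        have := h.2; rw [p.2.2.2, Fin.val_castLE] at this; omega⟩,
      (letter_cons_succ _ _ 0).trans p.2.2.2,
      by rw [letter_cons_zero, Fin.val_castLE]; omega⟩
  invFun v := (⟨v.1 0, by have := v.2.2.2; rw [letter_zero] at this; omega⟩,
    ⟨Fin.tail v.1, v.2.1.tail, (letter_tail _ 0).trans v.2.2.1⟩)
  left_inv p := Prod.ext (Fin.ext (Fin.val_castLE hj.le p.1))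
    (Subtype.ext (Fin.tail_cons (α := fun _ => Fin k) (Fin.castLE hj.le p.1) p.2.1))
  right_inv v := Subtype.ext (Fin.cons_self_tail v.1)

lemma fFirst_add_two_add_mul {n k j : ℕ} (hj : j < k) :
    fFirst (n + 2) k j + j * fFirst n k j = f (n + 1) k := by
  rw [f, Nat.card_subtype_eq_card_and_add_card_and_not _ (ConsCreates212 j),
    ← Nat.card_congr (avoidersTailEquiv hj), ← Nat.card_congr (avoidersConsEquiv hj), Nat.card_prod,
    Nat.card_eq_fintype_card (α := Fin j), Fintype.card_fin, add_comm (j * _)]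
  rfl

section GeneratingFunction

variable {R : Type*} [CommRing R]

lemma mk_fFirst_mul {k j : ℕ} (hj : j < k) :
    mk (fun n => (fFirst n k j : R)) * (1 + C (j : R) * X ^ 2) = X * mk fun n => (f n k : R) := by
  ext n
  rw [mul_add, mul_one, mul_left_comm, map_add, coeff_C_mul, coeff_mul_X_pow', coeff_mk]
  rcases n with _ | _ | n
  · simp [fFirst_zero]
  · simp [fFirst_one hj, f_zero]
  · rw [coeff_succ_X_mul, coeff_mk, if_pos (by omega), show n + 1 + 1 - 2 = n from rfl, coeff_mk,
      ← fFirst_add_two_add_mul hj]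
    push_cast
    ring

lemma mk_f_eq_one_add_sum (k : ℕ) :
    mk (fun n => (f n k : R)) = 1 + ∑ j ∈ Finset.range k, mk fun n => (fFirst n k j : R) := by
  ext (_ | n)
  · simp [f_zero, fFirst_zero]
  · simp [f_succ, coeff_one]

end GeneratingFunction

theorem stmt16 (k : ℕ) :
    (PowerSeries.mk fun n => (f n k : ℚ)) *
        ((∏ j ∈ Finset.range k, (1 + C (j : ℚ) * X ^ 2)) -
          X * ∑ j ∈ Finset.range k,
            ∏ i ∈ (Finset.range k).erase j, (1 + C (i : ℚ) * X ^ 2)) =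
      ∏ j ∈ Finset.range k, (1 + C (j : ℚ) * X ^ 2) := by
  have hterm : ∀ j ∈ Finset.range k,
      mk (fun n => (f n k : ℚ)) * (X * ∏ i ∈ (Finset.range k).erase j, (1 + C (i : ℚ) * X ^ 2)) =
        mk (fun n => (fFirst n k j : ℚ)) * ∏ i ∈ Finset.range k, (1 + C (i : ℚ) * X ^ 2) := by
    intro j hj
    rw [← Finset.mul_prod_erase _ _ hj, ← mul_assoc, ← mul_assoc,
      mk_fFirst_mul (Finset.mem_range.1 hj)]
    ring
  rw [mul_sub, Finset.mul_sum, Finset.mul_sum, Finset.sum_congr rfl hterm, ← Finset.sum_mul,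
    mk_f_eq_one_add_sum]
  ring
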